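/- Suppose C ∈ SL(2,ℝ) satisfies ‖C‖ ≥ μ^m with μ > 1, and B ∈ SL(2,ℝ) is hyperbolic. If the angle between the most expanded direction u(C) of C (equivalently, the most contracted direction of C⁻¹) and the most contracted direction s(B) of B is 2θ with 0 < 2θ < π/2, then ‖B·C‖ ≥ ‖B‖·‖C‖·sin(2θ) ≥ ‖B‖·μ^m·sin(2θ). -/

import Mathlib

/-!
The area form `ω` of an oriented Euclidean plane satisfies `ω (f x) (f y) = det f * ω x y` and
`|ω x y| = ‖x‖ * ‖y‖ * sin ∠(x, y) ≤ ‖x‖ * ‖y‖`. For `det B = 1` and the unit vector `s = s(B)`,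
which `B` shrinks to length `‖B‖⁻¹`, this gives `‖v‖ * sin ∠(v, s) ≤ ‖B‖⁻¹ * ‖B v‖` for every `v`.
Take `v = C u(C)`, of length `‖C‖`, and note `‖B C‖ ≥ ‖B C u(C)‖` as `u(C)` is a unit vector.
-/

noncomputable def act (A : Matrix (Fin 2) (Fin 2) ℝ) :
    EuclideanSpace ℝ (Fin 2) →L[ℝ] EuclideanSpace ℝ (Fin 2) :=
  Matrix.toEuclideanCLM (𝕜 := ℝ) A

open InnerProductGeometry Module

namespace Orientation

variable {E : Type*} [NormedAddCommGroup E] [InnerProductSpace ℝ E] [Fact (finrank ℝ E = 2)]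
  (o : Orientation ℝ E (Fin 2))

theorem areaForm_comp_linearMap (f : E →ₗ[ℝ] E) (x y : E) :
    o.areaForm (f x) (f y) = LinearMap.det f * o.areaForm x y := by
  have hb := o.finOrthonormalBasis_orientation two_pos Fact.out
  have hfv : ![f x, f y] = f ∘ ![x, y] := by
    ext i
    fin_cases i <;> rfl
  simp only [areaForm_to_volumeForm, o.volumeForm_robust _ hb, hfv, Basis.det_comp]

theorem abs_areaForm_eq_norm_mul_norm_mul_sin_angle (x y : E) :
    |o.areaForm x y| = ‖x‖ * ‖y‖ * Real.sin (angle x y) := by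
  rw [mul_comm, sin_angle_mul_norm_mul_norm, ← Real.sqrt_sq_eq_abs]
  congr 1
  rw [real_inner_self_eq_norm_sq, real_inner_self_eq_norm_sq, ← o.inner_sq_add_areaForm_sq x y]
  ring

end Orientation

variable {E : Type*} [NormedAddCommGroup E] [InnerProductSpace ℝ E] [Fact (finrank ℝ E = 2)]

theorem LinearMap.abs_det_mul_norm_mul_norm_mul_sin_angle_le (f : E →ₗ[ℝ] E) (x y : E) :
    |LinearMap.det f| * (‖x‖ * ‖y‖ * Real.sin (angle x y)) ≤ ‖f x‖ * ‖f y‖ := by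
  have : FiniteDimensional ℝ E := .of_fact_finrank_eq_two
  let o : Orientation ℝ E (Fin 2) := (finBasisOfFinrankEq ℝ E Fact.out).orientation
  rw [← o.abs_areaForm_eq_norm_mul_norm_mul_sin_angle, ← abs_mul,
    ← o.areaForm_comp_linearMap]
  exact o.abs_areaForm_le _ _

theorem ContinuousLinearMap.opNorm_mul_norm_mul_sin_angle_le (f : E →L[ℝ] E)
    (hf : LinearMap.det (f : E →ₗ[ℝ] E) = 1) {s : E} (hs : ‖s‖ = 1) (hfs : ‖f s‖ = ‖f‖⁻¹)
    (v : E) : ‖f‖ * ‖v‖ * Real.sin (angle v s) ≤ ‖f v‖ := by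
  have h := (f : E →ₗ[ℝ] E).abs_det_mul_norm_mul_norm_mul_sin_angle_le s v
  rw [hf, abs_one, one_mul, hs, one_mul, angle_comm] at h
  calc ‖f‖ * ‖v‖ * Real.sin (angle v s) = ‖f‖ * (‖v‖ * Real.sin (angle v s)) := mul_assoc _ _ _
    _ ≤ ‖f‖ * (‖f‖⁻¹ * ‖f v‖) := mul_le_mul_of_nonneg_left (hfs ▸ h) (norm_nonneg f)
    _ = ‖f‖ * ‖f‖⁻¹ * ‖f v‖ := (mul_assoc _ _ _).symm
    _ ≤ ‖f v‖ := mul_le_of_le_one_left (norm_nonneg _) mul_inv_le_one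

instance : Fact (finrank ℝ (EuclideanSpace ℝ (Fin 2)) = 2) := ⟨finrank_euclideanSpace_fin⟩

theorem det_act (A : Matrix (Fin 2) (Fin 2) ℝ) :
    LinearMap.det (act A : EuclideanSpace ℝ (Fin 2) →ₗ[ℝ] EuclideanSpace ℝ (Fin 2)) = A.det := by
  rw [act, Matrix.coe_toEuclideanCLM_eq_toEuclideanLin, Matrix.toEuclideanLin_eq_toLin_orthonormal,
    LinearMap.det_toLin]

theorem act_mul (A B : Matrix (Fin 2) (Fin 2) ℝ) : act (A * B) = act A ∘L act B :=
  map_mul _ A B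

theorem stmt19_general (B C : Matrix (Fin 2) (Fin 2) ℝ)
    (hdetB : B.det = 1)
    (mu m : ℝ) (hC : mu ^ m ≤ ‖act C‖)
    (uC sB : EuclideanSpace ℝ (Fin 2))
    (huC : ‖uC‖ = 1) (huC' : ‖act C uC‖ = ‖act C‖)
    (hsB : ‖sB‖ = 1) (hsB' : ‖act B sB‖ = ‖act B‖⁻¹)
    (θ : ℝ)
    (hangle : InnerProductGeometry.angle (act C uC) sB = 2 * θ) :
    ‖act B‖ * ‖act C‖ * Real.sin (2 * θ) ≤ ‖act (B * C)‖ ∧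
      ‖act B‖ * (mu ^ m) * Real.sin (2 * θ) ≤
        ‖act B‖ * ‖act C‖ * Real.sin (2 * θ) := by
  have hsin : 0 ≤ Real.sin (2 * θ) := hangle ▸ sin_angle_nonneg _ _
  refine ⟨?_, by gcongr⟩
  calc ‖act B‖ * ‖act C‖ * Real.sin (2 * θ)
      = ‖act B‖ * ‖act C uC‖ * Real.sin (angle (act C uC) sB) := by rw [huC', hangle]
    _ ≤ ‖act B (act C uC)‖ :=
        (act B).opNorm_mul_norm_mul_sin_angle_le ((det_act B).trans hdetB) hsB hsB' _
    _ = ‖act (B * C) uC‖ := by rw [act_mul]; rfl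
    _ ≤ ‖act (B * C)‖ := (act (B * C)).unit_le_opNorm uC huC.le

/-- Suppose `C ∈ SL(2,ℝ)` with `‖C‖ ≥ μ^m` (`μ > 1`) and `B ∈ SL(2,ℝ)` is
hyperbolic.  If the angle between the most expanded direction of `C` — realized,
as a projective direction, by `C·u(C)`, the most contracted direction of `C⁻¹` —
and the most contracted direction `s(B)` of `B` is `2θ` with `0 < 2θ < π/2`, then
`‖B·C‖ ≥ ‖B‖·‖C‖·sin(2θ) ≥ ‖B‖·μ^m·sin(2θ)`. -/
theorem stmt19 (B C : Matrix (Fin 2) (Fin 2) ℝ)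
    (hdetB : B.det = 1) (hdetC : C.det = 1)
    (mu m : ℝ) (hmu : 1 < mu) (hC : mu ^ m ≤ ‖act C‖) (hB : 1 < ‖act B‖)
    (uC sB : EuclideanSpace ℝ (Fin 2))
    (huC : ‖uC‖ = 1) (huC' : ‖act C uC‖ = ‖act C‖)
    (hsB : ‖sB‖ = 1) (hsB' : ‖act B sB‖ = ‖act B‖⁻¹)
    (θ : ℝ) (hθ0 : 0 < 2 * θ) (hθ1 : 2 * θ < Real.pi / 2)
    (hangle : InnerProductGeometry.angle (act C uC) sB = 2 * θ) :
    ‖act B‖ * ‖act C‖ * Real.sin (2 * θ) ≤ ‖act (B * C)‖ ∧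
      ‖act B‖ * (mu ^ m) * Real.sin (2 * θ) ≤
        ‖act B‖ * ‖act C‖ * Real.sin (2 * θ) :=
  stmt19_general B C hdetB mu m hC uC sB huC huC' hsB hsB' θ hangle
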